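/- Let (E,F) be a uniformly self-similar ends space and let H₁, H₂, H₃, H₄ be half-spaces of (E,F) with H₁ ⊆ H₃, H₂ ⊆ H₃, H₄ ⊆ H₃, and H₄ disjoint from both H₁ and H₂. Then there exists φ ∈ Homeo(E,F) supported on H₃ such that φ(H₁) = H₂. -/

import Mathlib

section EndsSpace

variable {E : Type*} [TopologicalSpace E]

/-- A homeomorphism of pairs from `(A, A ∩ F)` to `(B, B ∩ F)`:
a homeomorphism of the subspaces `A → B` carrying `A ∩ F` onto `B ∩ F`. -/
def PairHomeo (F A B : Set E) : Prop :=
  ∃ h : A ≃ₜ B, ∀ x : A, ((h x : E) ∈ F ↔ (x : E) ∈ F)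

/-- `(E, F)` is self-similar: every partition of `E` into finitely many pairwise
disjoint nonempty clopen sets has a piece containing a clopen set `D` with
`(D, D ∩ F)` homeomorphic (as a pair) to `(E, F)`. -/
def SelfSimilarPair (F : Set E) : Prop :=
  ∀ (n : ℕ) (P : Fin n → Set E),
    (∀ i, IsClopen (P i)) → (∀ i, (P i).Nonempty) →
    Pairwise (Function.onFun Disjoint P) → (⋃ i, P i) = Set.univ →
    ∃ i, ∃ D : Set E, IsClopen D ∧ D ⊆ P i ∧ PairHomeo F D Set.univ

/-- The preorder `x ≼ y` on ends: every clopen neighborhood `U` of `y` contains a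
clopen set `D` for which there are a clopen neighborhood `V` of `x` and a
homeomorphism of pairs `(V, V ∩ F) → (D, D ∩ F)`. -/
def EndsLE (F : Set E) (x y : E) : Prop :=
  ∀ U : Set E, IsClopen U → y ∈ U →
    ∃ D : Set E, D ⊆ U ∧ IsClopen D ∧
      ∃ V : Set E, IsClopen V ∧ x ∈ V ∧ PairHomeo F V D

/-- The equivalence `x ∼ y`: `x ≼ y` and `y ≼ x`. -/
def EndsEquiv (F : Set E) (x y : E) : Prop := EndsLE F x y ∧ EndsLE F y x

/-- `x` is a maximal end. -/
def MaximalEnd (F : Set E) (x : E) : Prop := ∀ y, EndsLE F x y → EndsLE F y x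

/-- `M(E)`, the set of maximal ends. -/
def MaxSet (F : Set E) : Set E := {x | MaximalEnd F x}

/-- `(E, F)` is uniformly self-similar: it is self-similar, `M(E)` is a single
`∼`-equivalence class, and `M(E)` is homeomorphic to the Cantor space `ℕ → Bool`. -/
def UniformlySelfSimilar (F : Set E) : Prop :=
  SelfSimilarPair F ∧
  (∃ x, MaxSet F = {y | EndsEquiv F x y}) ∧
  Nonempty (↥(MaxSet F) ≃ₜ (ℕ → Bool))

/-- The group `Homeo(E,F)` of homeomorphisms of `E` preserving `F`,
as a subgroup of the permutation group of `E`. -/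
def EndsHomeo (F : Set E) : Subgroup (Equiv.Perm E) where
  carrier := {h | Continuous h ∧ Continuous h.symm ∧ ∀ x, h x ∈ F ↔ x ∈ F}
  one_mem' := ⟨continuous_id, continuous_id, fun _ => Iff.rfl⟩
  mul_mem' := by
    rintro a b ⟨ha1, ha2, ha3⟩ ⟨hb1, hb2, hb3⟩
    refine ⟨?_, ?_, fun x => ?_⟩
    · exact ha1.comp hb1
    · exact hb2.comp ha2
    · exact (ha3 (b x)).trans (hb3 x)
  inv_mem' := by
    rintro a ⟨ha1, ha2, ha3⟩
    refine ⟨ha2, ha1, fun x => ?_⟩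
    have h := ha3 (a⁻¹ x)
    rw [Equiv.Perm.inv_def, Equiv.apply_symm_apply] at h
    exact h.symm

/-- A half-space of `(E,F)`: a clopen set meeting `M(E)` in a nonempty proper subset. -/
def IsHalfSpace (F H : Set E) : Prop :=
  IsClopen H ∧ (H ∩ MaxSet F).Nonempty ∧ H ∩ MaxSet F ⊂ MaxSet F

/-- `φ` is an `H`-translation: the sets `φⁿ(H)`, `n ∈ ℤ`, are pairwise disjoint. -/
def IsHTranslation (H : Set E) (φ : Equiv.Perm E) : Prop :=
  ∀ m n : ℤ, m ≠ n → Disjoint ((φ ^ m) '' H) ((φ ^ n) '' H)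

/-- A homeomorphism is supported on `H` if it fixes every point outside `H`. -/
def SupportedOn (H : Set E) (h : Equiv.Perm E) : Prop := ∀ x ∉ H, h x = x

end EndsSpace

/-!
Every clopen set meeting `M(E)` contains a clopen copy of `(E, F)`: self-similarity and
compactness give an end `z` all of whose clopen neighbourhoods contain copies, every end is `≼ z`,
and a maximal end is therefore `≽ z`. If `Y ⊆ X` are clopen and `Y` meets `M(E)`, this yields
copies `cₙ(X)` with `cₙ₊₁(X) ⊆ cₙ(Y)`, `c₀ = id`, and diameters tending to `0`. The shells
`cₙ(X \ Y)` are disjoint and each is a copy of `X \ Y`; shifting every shell onto the next one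
and fixing all other points is a homeomorphism of pairs from `X` onto `X \ c₀(X \ Y) = Y`,
continuous at the limit point because the copies shrink. So any two clopen sets meeting `M(E)`
are homeomorphic as pairs. Apply this to `H₁, H₂` and to `H₃ \ H₁, H₃ \ H₂`, which both contain
a maximal end of `H₄`, and glue with the identity outside `H₃`.
-/

open Set Filter Topology Function

theorem IsCompact.continuousOn_image_of_leftInvOn {X Y : Type*} [TopologicalSpace X]
    [TopologicalSpace Y] [T2Space Y] {f : X → Y} {g : Y → X} {s : Set X} (hs : IsCompact s)
    (hf : ContinuousOn f s) (h : LeftInvOn g f s) : ContinuousOn g (f '' s) := by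
  refine continuousOn_iff_isClosed.2 fun t ht => ⟨f '' (t ∩ s), ?_, ?_⟩
  · exact ((hs.inter_left ht).image_of_continuousOn (hf.mono inter_subset_right)).isClosed
  · rw [inter_eq_self_of_subset_left (image_mono inter_subset_right), h.image_inter']

section PairHomeoOn

variable {E : Type*} [TopologicalSpace E] {F A B C : Set E} {f g : E → E}

/-- Continuous bijections `(A, A ∩ F) → (B, B ∩ F)` given as maps `E → E`: for compact `A` these
are the homeomorphisms of pairs (`IsPairHomeoOn.pairHomeo`), and they compose without subtypes. -/
structure IsPairHomeoOn (F : Set E) (f : E → E) (A B : Set E) : Prop where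
  bijOn : BijOn f A B
  continuousOn : ContinuousOn f A
  mem_iff : ∀ x ∈ A, f x ∈ F ↔ x ∈ F

namespace IsPairHomeoOn

protected theorem id (F A : Set E) : IsPairHomeoOn F id A A :=
  ⟨bijOn_id A, continuousOn_id, fun _ _ => Iff.rfl⟩

theorem comp (hg : IsPairHomeoOn F g B C) (hf : IsPairHomeoOn F f A B) :
    IsPairHomeoOn F (g ∘ f) A C :=
  ⟨hg.bijOn.comp hf.bijOn, hg.continuousOn.comp hf.continuousOn hf.bijOn.mapsTo,
    fun x hx => (hg.mem_iff _ (hf.bijOn.mapsTo hx)).trans (hf.mem_iff x hx)⟩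

theorem mono (hf : IsPairHomeoOn F f A B) (hC : C ⊆ A) : IsPairHomeoOn F f C (f '' C) :=
  ⟨(hf.bijOn.injOn.mono hC).bijOn_image, hf.continuousOn.mono hC,
    fun x hx => hf.mem_iff x (hC hx)⟩

theorem congr (hf : IsPairHomeoOn F f A B) (h : EqOn f g A) : IsPairHomeoOn F g A B :=
  ⟨(h.bijOn_iff).1 hf.bijOn, hf.continuousOn.congr h.symm, fun x hx => h hx ▸ hf.mem_iff x hx⟩

theorem union {A' B' : Set E} (hf : IsPairHomeoOn F f A B) (hf' : IsPairHomeoOn F f A' B')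
    (hA : IsOpen A) (hA' : IsOpen A') (hB : Disjoint B B') :
    IsPairHomeoOn F f (A ∪ A') (B ∪ B') := by
  have hAA' : Disjoint A A' := (hB.preimage f).mono hf.bijOn.mapsTo hf'.bijOn.mapsTo
  have hinj : InjOn f (A ∪ A') := by
    refine (injOn_union hAA').2 ⟨hf.bijOn.injOn, hf'.bijOn.injOn, fun x hx y hy hxy => ?_⟩
    exact disjoint_left.mp hB (hf.bijOn.mapsTo hx) (hxy ▸ hf'.bijOn.mapsTo hy)
  refine ⟨hf.bijOn.union hf'.bijOn hinj, hf.continuousOn.union_of_isOpen hf'.continuousOn hA hA',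
    ?_⟩
  · rintro x (hx | hx)
    exacts [hf.mem_iff x hx, hf'.mem_iff x hx]

theorem piecewise [∀ x, Decidable (x ∈ A)] {A' B' : Set E} (hf : IsPairHomeoOn F f A B)
    (hg : IsPairHomeoOn F g A' B') (hA : IsOpen A) (hA' : IsOpen A') (hAA' : Disjoint A A')
    (hB : Disjoint B B') : IsPairHomeoOn F (A.piecewise f g) (A ∪ A') (B ∪ B') :=
  (hf.congr (piecewise_eqOn A f g).symm).union
    (hg.congr ((piecewise_eqOn_compl A f g).symm.mono hAA'.subset_compl_left)) hA hA' hB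

end IsPairHomeoOn

theorem PairHomeo.symm (h : PairHomeo F A B) : PairHomeo F B A := by
  obtain ⟨h, hF⟩ := h
  exact ⟨h.symm, fun y => by simpa using (hF (h.symm y)).symm⟩

theorem PairHomeo.exists_isPairHomeoOn (h : PairHomeo F A B) : ∃ f, IsPairHomeoOn F f A B := by
  obtain ⟨h, hF⟩ := h
  set f := Function.extend ((↑) : A → E) (fun a => (h a : E)) id
  have hf : ∀ x (hx : x ∈ A), f x = h ⟨x, hx⟩ :=
    fun x hx => Subtype.val_injective.extend_apply _ _ ⟨x, hx⟩
  refine ⟨f, ⟨fun x hx => ?_, fun x hx y hy hxy => ?_, fun y hy => ?_⟩, ?_, fun x hx => ?_⟩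
  · rw [hf x hx]
    exact (h _).2
  · rw [hf x hx, hf y hy] at hxy
    exact congrArg Subtype.val (h.injective (Subtype.ext hxy))
  · exact ⟨h.symm ⟨y, hy⟩, (h.symm _).2, by rw [hf _ (h.symm _).2, h.apply_symm_apply]⟩
  · rw [continuousOn_iff_continuous_domRestrict]
    have : A.domRestrict f = fun a => (h a : E) := funext fun a => hf a a.2
    rw [this]
    fun_prop
  · rw [hf x hx]
    exact hF ⟨x, hx⟩

end PairHomeoOn

section CompactPairHomeoOn

variable {E : Type*} [TopologicalSpace E] [T2Space E] {F A B C : Set E} {f g : E → E}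

namespace IsPairHomeoOn

theorem exists_invOn [Nonempty E] (hf : IsPairHomeoOn F f A B) (hA : IsCompact A) :
    ∃ g, IsPairHomeoOn F g B A ∧ InvOn g f A B := by
  have hinv := hf.bijOn.invOn_invFunOn
  have hmaps : MapsTo (invFunOn f A) B A := hf.bijOn.surjOn.mapsTo_invFunOn
  refine ⟨invFunOn f A, ⟨hinv.symm.bijOn hmaps hf.bijOn.mapsTo, ?_, fun y hy => ?_⟩, hinv⟩
  · rw [← hf.bijOn.image_eq]
    exact hA.continuousOn_image_of_leftInvOn hf.continuousOn hinv.1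
  · have := hf.mem_iff _ (hmaps hy)
    rw [hinv.2 hy] at this
    exact this.symm

theorem exists_symm_trans [Nonempty E] (hf : IsPairHomeoOn F f A B)
    (hg : IsPairHomeoOn F g A C) (hA : IsCompact A) : ∃ k, IsPairHomeoOn F k B C := by
  obtain ⟨f', hf', -⟩ := hf.exists_invOn hA
  exact ⟨g ∘ f', hg.comp hf'⟩

theorem isClosed_image (hf : IsPairHomeoOn F f A B) (hA : IsCompact A) (hC : IsClosed C)
    (hCA : C ⊆ A) : IsClosed (f '' C) :=
  ((hA.of_isClosed_subset hC hCA).image_of_continuousOn (hf.continuousOn.mono hCA)).isClosed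

theorem isClopen_image (hf : IsPairHomeoOn F f A B) (hA : IsCompact A) (hB : IsOpen B)
    (hC : IsClopen C) (hCA : C ⊆ A) : IsClopen (f '' C) := by
  refine ⟨hf.isClosed_image hA hC.isClosed hCA, ?_⟩
  have hAC : f '' (A \ C) = B \ f '' C := by
    rw [hf.bijOn.injOn.image_sdiff_subset hCA, hf.bijOn.image_eq]
  rw [← sdiff_sdiff_cancel_left (hf.bijOn.image_eq ▸ image_mono hCA : f '' C ⊆ B), ← hAC]
  exact hB.sdiff (hf.isClosed_image hA (hA.isClosed.sdiff hC.isOpen) sdiff_subset)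

theorem pairHomeo (hf : IsPairHomeoOn F f A B) (hA : IsCompact A) : PairHomeo F A B :=
  haveI := isCompact_iff_compactSpace.mp hA
  ⟨(hf.continuousOn.mapsToRestrict hf.bijOn.mapsTo).homeoOfEquivCompactToT2
    (f := BijOn.equiv f hf.bijOn), fun x => hf.mem_iff x x.2⟩

theorem exists_mem_endsHomeo [CompactSpace E] (hf : IsPairHomeoOn F f univ univ) :
    ∃ φ ∈ EndsHomeo F, ⇑φ = f := by
  have hcont : Continuous f := continuousOn_univ.mp hf.continuousOn
  let φ := Equiv.ofBijective f (bijOn_univ.mp hf.bijOn)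
  exact ⟨φ, ⟨hcont, (hcont.homeoOfEquivCompactToT2 (f := φ)).symm.continuous,
    fun x => hf.mem_iff x trivial⟩, rfl⟩

end IsPairHomeoOn

end CompactPairHomeoOn

section MaximalEnds

variable {E : Type*} [TopologicalSpace E] [CompactSpace E] [T2Space E] {F A B : Set E}
  {f : E → E} {x y z : E}

theorem EndsLE.trans (hxy : EndsLE F x y) (hyz : EndsLE F y z) : EndsLE F x z := by
  intro U hU hzU
  obtain ⟨D, hDU, hD, V, hV, hyV, hVD⟩ := hyz U hU hzU
  obtain ⟨f, hf⟩ := hVD.exists_isPairHomeoOn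
  obtain ⟨D', hD'V, hD', V', hV', hxV', hV'D'⟩ := hxy V hV hyV
  obtain ⟨g, hg⟩ := hV'D'.exists_isPairHomeoOn
  exact ⟨f '' D', (image_mono hD'V).trans (hf.bijOn.image_eq ▸ hDU),
    hf.isClopen_image hV.isClosed.isCompact hD.isOpen hD' hD'V, V', hV', hxV',
    ((hf.mono hD'V).comp hg).pairHomeo hV'.isClosed.isCompact⟩

theorem IsPairHomeoOn.endsLE_apply (hf : IsPairHomeoOn F f A B) (hA : IsClopen A)
    (hB : IsOpen B) (hx : x ∈ A) : EndsLE F x (f x) := by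
  intro U hU hfx
  have hV : IsClopen (A ∩ f ⁻¹' U) :=
    ⟨hf.continuousOn.preimage_isClosed_of_isClosed hA.isClosed hU.isClosed,
      hf.continuousOn.isOpen_inter_preimage hA.isOpen hU.isOpen⟩
  exact ⟨f '' (A ∩ f ⁻¹' U), image_subset_iff.2 inter_subset_right,
    hf.isClopen_image hA.isClosed.isCompact hB hV inter_subset_left, _, hV, ⟨hx, hfx⟩,
    (hf.mono inter_subset_left).pairHomeo hV.isClosed.isCompact⟩

theorem IsPairHomeoOn.maximalEnd_apply (hf : IsPairHomeoOn F f A B) (hA : IsClopen A)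
    (hB : IsOpen B) (hx : x ∈ A) (hmax : MaximalEnd F x) : MaximalEnd F (f x) :=
  fun y hy =>
    (hmax y ((hf.endsLE_apply hA hB hx).trans hy)).trans (hf.endsLE_apply hA hB hx)

end MaximalEnds

section Copies

variable {E : Type*} [TopologicalSpace E] {F S U V₁ V₂ X A B : Set E} {f : E → E} {x : E}

def ContainsCopy (F U : Set E) : Prop :=
  ∃ D f, IsClopen D ∧ D ⊆ U ∧ IsPairHomeoOn F f univ D

theorem containsCopy_univ (F : Set E) : ContainsCopy F univ :=
  ⟨univ, id, isClopen_univ, subset_rfl, .id F univ⟩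

theorem ContainsCopy.mono (h : ContainsCopy F U) (hUV : U ⊆ V₁) : ContainsCopy F V₁ := by
  obtain ⟨D, f, hD, hDU, hf⟩ := h
  exact ⟨D, f, hD, hDU.trans hUV, hf⟩

theorem ContainsCopy.nonempty [Nonempty E] (h : ContainsCopy F U) : U.Nonempty := by
  obtain ⟨D, f, -, hDU, hf⟩ := h
  exact ⟨_, hDU (hf.bijOn.mapsTo (mem_univ (Classical.arbitrary E)))⟩

theorem SelfSimilarPair.containsCopy_or_compl (hss : SelfSimilarPair F) {T : Set E}
    (hT : IsClopen T) : ContainsCopy F T ∨ ContainsCopy F Tᶜ := by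
  rcases T.eq_empty_or_nonempty with rfl | hT₁
  · exact Or.inr (compl_empty ▸ containsCopy_univ F)
  rcases Tᶜ.eq_empty_or_nonempty with hT₂ | hT₂
  · exact Or.inl (compl_empty_iff.mp hT₂ ▸ containsCopy_univ F)
  have hdisj : Pairwise (Disjoint on ![T, Tᶜ]) := by
    simp [Pairwise, Fin.forall_fin_two, onFun, disjoint_compl_right, disjoint_compl_left]
  have hcover : ⋃ i, ![T, Tᶜ] i = univ := by
    simp [iUnion_eq_univ_iff, Fin.exists_fin_two, em]
  obtain ⟨i, D, hD, hDi, hDE⟩ := hss 2 ![T, Tᶜ] (Fin.forall_fin_two.2 ⟨hT, hT.compl⟩)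
    (Fin.forall_fin_two.2 ⟨hT₁, hT₂⟩) hdisj hcover
  obtain ⟨f, hf⟩ := hDE.symm.exists_isPairHomeoOn
  fin_cases i
  exacts [Or.inl ⟨D, f, hD, hDi, hf⟩, Or.inr ⟨D, f, hD, hDi, hf⟩]

variable [CompactSpace E] [T2Space E]

theorem ContainsCopy.image (h : ContainsCopy F S) (hf : IsPairHomeoOn F f A B) (hA : IsClopen A)
    (hB : IsOpen B) (hSA : S ⊆ A) : ContainsCopy F (f '' S) := by
  obtain ⟨D, g, hD, hDS, hg⟩ := h
  exact ⟨f '' D, f ∘ g, hf.isClopen_image hA.isClosed.isCompact hB hD (hDS.trans hSA),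
    image_mono hDS, (hf.mono (hDS.trans hSA)).comp hg⟩

namespace SelfSimilarPair

theorem containsCopy_or_of_union (hss : SelfSimilarPair F) (hV₁ : IsClopen V₁)
    (h : ContainsCopy F (V₁ ∪ V₂)) : ContainsCopy F V₁ ∨ ContainsCopy F V₂ := by
  obtain ⟨D, f, hD, hDV, hf⟩ := h
  have hT : IsClopen (f ⁻¹' V₁) := hV₁.preimage (continuousOn_univ.mp hf.continuousOn)
  refine (hss.containsCopy_or_compl hT).imp (fun hc => ?_) (fun hc => ?_)
  · exact (hc.image hf isClopen_univ hD.isOpen (subset_univ _)).mono (image_preimage_subset f V₁)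
  · refine (hc.image hf isClopen_univ hD.isOpen (subset_univ _)).mono ?_
    rintro _ ⟨x, hx, rfl⟩
    exact (hDV (hf.bijOn.mapsTo (mem_univ x))).resolve_left hx

theorem exists_forall_containsCopy [Nonempty E] (hss : SelfSimilarPair F) :
    ∃ z, ∀ V, IsClopen V → z ∈ V → ContainsCopy F V := by
  by_contra! h
  -- a copy in `V ∪ W` gives one in `V` or in `W`, so by compactness `univ` would have none
  obtain ⟨V, -, hV, hVc⟩ : ∃ V, IsClopen V ∧ univ ⊆ V ∧ ¬ContainsCopy F V := by
    refine isCompact_univ.induction_on ?_ ?_ ?_ ?_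
    · exact ⟨∅, isClopen_empty, subset_rfl, fun hc => not_nonempty_empty hc.nonempty⟩
    · rintro s t hst ⟨V, hV, htV, hVc⟩
      exact ⟨V, hV, hst.trans htV, hVc⟩
    · rintro s t ⟨V, hV, hsV, hVc⟩ ⟨W, hW, htW, hWc⟩
      exact ⟨V ∪ W, hV.union hW, union_subset_union hsV htW,
        fun hc => (hss.containsCopy_or_of_union hV hc).elim hVc hWc⟩
    · intro z _
      obtain ⟨V, hV, hzV, hVc⟩ := h z
      exact ⟨V, mem_nhdsWithin_of_mem_nhds (hV.isOpen.mem_nhds hzV), V, hV, subset_rfl, hVc⟩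
  exact hVc ((containsCopy_univ F).mono hV)

theorem containsCopy_of_maximalEnd (hss : SelfSimilarPair F) (hU : IsClopen U) (hxU : x ∈ U)
    (hx : MaximalEnd F x) : ContainsCopy F U := by
  have : Nonempty E := ⟨x⟩
  obtain ⟨z, hz⟩ := hss.exists_forall_containsCopy
  -- every end is `≼ z`, so maximality gives `z ≼ x`, which moves the copies near `z` into `U`
  have hxz : EndsLE F x z := fun V hV hzV => by
    obtain ⟨D, f, hD, hDV, hf⟩ := hz V hV hzV
    exact ⟨D, hDV, hD, univ, isClopen_univ, mem_univ x, hf.pairHomeo isCompact_univ⟩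
  obtain ⟨D, hDU, hD, V, hV, hzV, hVD⟩ := hx z hxz U hU hxU
  obtain ⟨f, hf⟩ := hVD.exists_isPairHomeoOn
  exact ((hz V hV hzV).image hf hV hD.isOpen subset_rfl).mono (hf.bijOn.image_eq ▸ hDU)

end SelfSimilarPair

end Copies

section ClopenCopy

variable {E : Type*} [TopologicalSpace E] {F X Y U : Set E} {m : E}

structure ClopenCopy (F X : Set E) where
  toFun : E → E
  isClopen_image : IsClopen (toFun '' X)
  isPairHomeoOn : IsPairHomeoOn F toFun X (toFun '' X)

instance : CoeFun (ClopenCopy F X) fun _ => E → E := ⟨ClopenCopy.toFun⟩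

def ClopenCopy.refl (hX : IsClopen X) : ClopenCopy F X :=
  ⟨id, by rwa [image_id], by simpa using IsPairHomeoOn.id F X⟩

theorem ContainsCopy.exists_clopenCopy [CompactSpace E] [T2Space E] (h : ContainsCopy F U)
    (hX : IsClopen X) : ∃ c : ClopenCopy F X, c '' X ⊆ U := by
  obtain ⟨D, f, hD, hDU, hf⟩ := h
  exact ⟨⟨f, hf.isClopen_image isCompact_univ hD.isOpen hX (subset_univ X),
    hf.mono (subset_univ X)⟩, image_subset_iff.2 fun x _ => hDU (hf.bijOn.mapsTo (mem_univ x))⟩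

theorem SelfSimilarPair.exists_clopenCopy_subset [CompactSpace E] [T2Space E]
    [TotallyDisconnectedSpace E] (hss : SelfSimilarPair F) (hX : IsClopen X) (hU : IsOpen U)
    (hm : m ∈ U) (hmax : MaximalEnd F m) : ∃ c : ClopenCopy F X, c '' X ⊆ U := by
  obtain ⟨W, ⟨hmW, hW⟩, hWU⟩ := (nhds_basis_clopen m).mem_iff.mp (hU.mem_nhds hm)
  obtain ⟨c, hc⟩ := (hss.containsCopy_of_maximalEnd hW hmW hmax).exists_clopenCopy hX
  exact ⟨c, hc.trans hWU⟩

end ClopenCopy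

section Shift

variable {E : Type*} {S T : ℕ → Set E} {k : ℕ → E → E} {x : E} {m n : ℕ}

open Classical in
noncomputable def shiftMap (S : ℕ → Set E) (k : ℕ → E → E) (x : E) : E :=
  if h : ∃ n, x ∈ S n then k h.choose x else x

theorem shiftMap_of_forall_notMem (hx : ∀ n, x ∉ S n) : shiftMap S k x = x := by
  rw [shiftMap, dif_neg (not_exists.2 hx)]

variable [TopologicalSpace E] {F : Set E}

/-- The data of a Hilbert-hotel shift `shiftMap S k` of the shells `S n` inside the tower `T`. -/
structure IsShiftSystem (F : Set E) (S T : ℕ → Set E) (k : ℕ → E → E) : Prop where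
  isClopen_shell : ∀ n, IsClopen (S n)
  isClopen_tower : ∀ n, IsClopen (T n)
  antitone_tower : Antitone T
  shell_subset_tower : ∀ n, S n ⊆ T n
  disjoint_shell_tower_succ : ∀ n, Disjoint (S n) (T (n + 1))
  isPairHomeoOn : ∀ n, IsPairHomeoOn F (k n) (S n) (S (n + 1))

namespace IsShiftSystem

theorem lt_of_mem_of_notMem (h : IsShiftSystem F S T k) (hm : x ∈ S m) (hn : x ∉ T n) :
    m < n :=
  lt_of_not_ge fun hnm => hn (h.antitone_tower hnm (h.shell_subset_tower m hm))

theorem le_of_mem_of_mem (h : IsShiftSystem F S T k) (hm : x ∈ S m) (hn : x ∈ T n) : n ≤ m :=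
  le_of_not_gt fun hmn =>
    disjoint_left.mp (h.disjoint_shell_tower_succ m) hm (h.antitone_tower hmn hn)

theorem eq_of_mem_of_mem (h : IsShiftSystem F S T k) (hm : x ∈ S m) (hn : x ∈ S n) : m = n :=
  le_antisymm (h.le_of_mem_of_mem hn (h.shell_subset_tower m hm))
    (h.le_of_mem_of_mem hm (h.shell_subset_tower n hn))

theorem shiftMap_of_mem (h : IsShiftSystem F S T k) (hx : x ∈ S n) : shiftMap S k x = k n x := by
  have hex : ∃ n, x ∈ S n := ⟨n, hx⟩
  rw [shiftMap, dif_pos hex, h.eq_of_mem_of_mem hex.choose_spec hx]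

theorem shiftMap_mem_shell_succ (h : IsShiftSystem F S T k) (hx : x ∈ S n) :
    shiftMap S k x ∈ S (n + 1) :=
  h.shiftMap_of_mem hx ▸ (h.isPairHomeoOn n).bijOn.mapsTo hx

theorem shiftMap_mem_iff (h : IsShiftSystem F S T k) (x : E) :
    shiftMap S k x ∈ F ↔ x ∈ F := by
  by_cases hx : ∃ n, x ∈ S n
  · obtain ⟨n, hn⟩ := hx
    rw [h.shiftMap_of_mem hn]
    exact (h.isPairHomeoOn n).mem_iff x hn
  · rw [shiftMap_of_forall_notMem (not_exists.1 hx)]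

theorem mapsTo_shiftMap (h : IsShiftSystem F S T k) (n : ℕ) :
    MapsTo (shiftMap S k) (T n) (T n) := by
  intro x hx
  by_cases hS : ∃ m, x ∈ S m
  · obtain ⟨m, hm⟩ := hS
    exact h.antitone_tower ((h.le_of_mem_of_mem hm hx).trans m.le_succ)
      (h.shell_subset_tower _ (h.shiftMap_mem_shell_succ hm))
  · rwa [shiftMap_of_forall_notMem (not_exists.1 hS)]

theorem bijOn_shiftMap (h : IsShiftSystem F S T k) :
    BijOn (shiftMap S k) (T 0) (T 0 \ S 0) := by
  refine ⟨fun x hx => ⟨h.mapsTo_shiftMap 0 hx, fun hx0 => ?_⟩, fun x _ y _ hxy => ?_,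
    fun y hy => ?_⟩
  · by_cases hS : ∃ m, x ∈ S m
    · obtain ⟨m, hm⟩ := hS
      exact m.succ_ne_zero (h.eq_of_mem_of_mem (h.shiftMap_mem_shell_succ hm) hx0)
    · exact hS ⟨0, shiftMap_of_forall_notMem (not_exists.1 hS) ▸ hx0⟩
  · by_cases hx : ∃ m, x ∈ S m <;> by_cases hy : ∃ n, y ∈ S n
    · obtain ⟨m, hm⟩ := hx
      obtain ⟨n, hn⟩ := hy
      obtain rfl : m = n := Nat.succ_injective
        (h.eq_of_mem_of_mem (hxy ▸ h.shiftMap_mem_shell_succ hm) (h.shiftMap_mem_shell_succ hn))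
      rw [h.shiftMap_of_mem hm, h.shiftMap_of_mem hn] at hxy
      exact (h.isPairHomeoOn m).bijOn.injOn hm hn hxy
    · obtain ⟨m, hm⟩ := hx
      rw [shiftMap_of_forall_notMem (not_exists.1 hy)] at hxy
      exact absurd ⟨m + 1, hxy ▸ h.shiftMap_mem_shell_succ hm⟩ hy
    · obtain ⟨n, hn⟩ := hy
      rw [shiftMap_of_forall_notMem (not_exists.1 hx)] at hxy
      exact absurd ⟨n + 1, hxy ▸ h.shiftMap_mem_shell_succ hn⟩ hx
    · rwa [shiftMap_of_forall_notMem (not_exists.1 hx),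
        shiftMap_of_forall_notMem (not_exists.1 hy)] at hxy
  · by_cases hS : ∃ m, y ∈ S m
    · obtain ⟨_ | m, hm⟩ := hS
      · exact absurd hm hy.2
      obtain ⟨x, hx, rfl⟩ := (h.isPairHomeoOn m).bijOn.surjOn hm
      exact ⟨x, h.antitone_tower m.zero_le (h.shell_subset_tower m hx), h.shiftMap_of_mem hx⟩
    · exact ⟨y, hy.1, shiftMap_of_forall_notMem (not_exists.1 hS)⟩

theorem continuousAt_shiftMap_of_mem (h : IsShiftSystem F S T k) (hx : x ∈ S n) :
    ContinuousAt (shiftMap S k) x := by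
  have hS : S n ∈ 𝓝 x := (h.isClopen_shell n).isOpen.mem_nhds hx
  exact ((h.isPairHomeoOn n).continuousOn.continuousAt hS).congr
    (eventually_of_mem hS fun y hy => (h.shiftMap_of_mem hy).symm)

theorem continuousAt_shiftMap_of_notMem (h : IsShiftSystem F S T k) (hx : ∀ m, x ∉ S m)
    (hxn : x ∉ T n) : ContinuousAt (shiftMap S k) x := by
  have hN : (T n)ᶜ \ ⋃ m ∈ Finset.range n, S m ∈ 𝓝 x :=
    ((h.isClopen_tower n).isClosed.isOpen_compl.sdiff
      (isClosed_biUnion_finset fun m _ => (h.isClopen_shell m).isClosed)).mem_nhds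
      ⟨hxn, by simpa using fun m _ => hx m⟩
  refine continuousAt_id.congr (eventually_of_mem hN fun y hy => ?_)
  refine (shiftMap_of_forall_notMem fun m hm => hy.2 ?_).symm
  exact mem_biUnion (Finset.mem_range.2 (h.lt_of_mem_of_notMem hm hy.1)) hm

end IsShiftSystem

end Shift

section ShiftMetric

variable {E : Type*} [PseudoMetricSpace E] [CompactSpace E] {F : Set E} {S T : ℕ → Set E}
  {k : ℕ → E → E}

namespace IsShiftSystem

theorem continuousAt_shiftMap_of_forall_mem (h : IsShiftSystem F S T k)
    (hdiam : Tendsto (fun n => Metric.diam (T n)) atTop (𝓝 0)) {x : E} (hx : ∀ n, x ∈ T n) :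
    ContinuousAt (shiftMap S k) x := by
  have hφx : shiftMap S k x = x := shiftMap_of_forall_notMem fun m hm =>
    disjoint_left.mp (h.disjoint_shell_tower_succ m) hm (hx (m + 1))
  rw [Metric.continuousAt_iff]
  intro ε hε
  obtain ⟨n, hn⟩ := (hdiam.eventually (gt_mem_nhds hε)).exists
  obtain ⟨δ, hδ, hball⟩ := Metric.isOpen_iff.mp (h.isClopen_tower n).isOpen x (hx n)
  refine ⟨δ, hδ, fun y hy => ?_⟩
  rw [hφx]
  exact (Metric.dist_le_diam_of_mem (h.isClopen_tower n).isClosed.isCompact.isBounded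
    (h.mapsTo_shiftMap n (hball (Metric.mem_ball.2 hy))) (hx n)).trans_lt hn

theorem continuous_shiftMap (h : IsShiftSystem F S T k)
    (hdiam : Tendsto (fun n => Metric.diam (T n)) atTop (𝓝 0)) : Continuous (shiftMap S k) := by
  refine continuous_iff_continuousAt.2 fun x => ?_
  by_cases hS : ∃ n, x ∈ S n
  · obtain ⟨n, hn⟩ := hS
    exact h.continuousAt_shiftMap_of_mem hn
  by_cases hT : ∀ n, x ∈ T n
  · exact h.continuousAt_shiftMap_of_forall_mem hdiam hT
  obtain ⟨n, hn⟩ := not_forall.1 hT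
  exact h.continuousAt_shiftMap_of_notMem (not_exists.1 hS) hn

theorem isPairHomeoOn_shiftMap (h : IsShiftSystem F S T k)
    (hdiam : Tendsto (fun n => Metric.diam (T n)) atTop (𝓝 0)) :
    IsPairHomeoOn F (shiftMap S k) (T 0) (T 0 \ S 0) :=
  ⟨h.bijOn_shiftMap, (h.continuous_shiftMap hdiam).continuousOn,
    fun x _ => h.shiftMap_mem_iff x⟩

end IsShiftSystem

end ShiftMetric

theorem SelfSimilarPair.exists_clopenCopy_subset_image_diam_le {E : Type*} [MetricSpace E]
    [CompactSpace E] [TotallyDisconnectedSpace E] {F X Y : Set E} {m : E}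
    (hss : SelfSimilarPair F) (hX : IsClopen X) (hY : IsClopen Y) (hYX : Y ⊆ X) (hm : m ∈ Y)
    (hmax : MaximalEnd F m) (c : ClopenCopy F X) {ε : ℝ} (hε : 0 < ε) :
    ∃ c' : ClopenCopy F X, c' '' X ⊆ c '' Y ∧ Metric.diam (c' '' X) ≤ ε := by
  have hcY : IsClopen (c '' Y) :=
    c.isPairHomeoOn.isClopen_image hX.isClosed.isCompact c.isClopen_image.isOpen hY hYX
  obtain ⟨c', hc'⟩ := hss.exists_clopenCopy_subset hX (hcY.isOpen.inter Metric.isOpen_ball)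
    ⟨mem_image_of_mem c hm, Metric.mem_ball_self (half_pos hε)⟩
    (c.isPairHomeoOn.maximalEnd_apply hX c.isClopen_image.isOpen (hYX hm) hmax)
  refine ⟨c', hc'.trans inter_subset_left, ?_⟩
  calc Metric.diam (c' '' X) ≤ Metric.diam (Metric.ball (c m) (ε / 2)) :=
        Metric.diam_mono (hc'.trans inter_subset_right) Metric.isBounded_ball
    _ ≤ 2 * (ε / 2) := Metric.diam_ball (half_pos hε).le
    _ = ε := by ring

section Absorption

variable {E : Type*} [TopologicalSpace E] {F X Y : Set E} {m : E}

theorem ClopenCopy.isShiftSystem [CompactSpace E] [T2Space E] (hX : IsClopen X)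
    (hY : IsClopen Y) (hYX : Y ⊆ X) (c : ℕ → ClopenCopy F X)
    (hc : ∀ n, c (n + 1) '' X ⊆ c n '' Y) {k : ℕ → E → E}
    (hk : ∀ n, IsPairHomeoOn F (k n) (c n '' (X \ Y)) (c (n + 1) '' (X \ Y))) :
    IsShiftSystem F (fun n => c n '' (X \ Y)) (fun n => c n '' X) k where
  isClopen_shell n := (c n).isPairHomeoOn.isClopen_image hX.isClosed.isCompact
    (c n).isClopen_image.isOpen (hX.diff hY) sdiff_subset
  isClopen_tower n := (c n).isClopen_image
  antitone_tower := antitone_nat_of_succ_le fun n => (hc n).trans (image_mono hYX)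
  shell_subset_tower _ := image_mono sdiff_subset
  disjoint_shell_tower_succ n := by
    rw [(c n).isPairHomeoOn.bijOn.injOn.image_sdiff_subset hYX]
    exact disjoint_sdiff_left.mono_right (hc n)
  isPairHomeoOn := hk

theorem SelfSimilarPair.exists_isPairHomeoOn_of_subset [TopologicalSpace.MetrizableSpace E]
    [CompactSpace E] [TotallyDisconnectedSpace E] (hss : SelfSimilarPair F) (hX : IsClopen X)
    (hY : IsClopen Y) (hYX : Y ⊆ X) (hm : m ∈ Y) (hmax : MaximalEnd F m) :
    ∃ φ, IsPairHomeoOn F φ X Y := by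
  let _ := TopologicalSpace.metrizableSpaceMetric E
  have : Nonempty E := ⟨m⟩
  have hpos (n : ℕ) : (0 : ℝ) < (1 / 2) ^ n := by positivity
  choose next hnext_subset hnext_diam using fun c n =>
    hss.exists_clopenCopy_subset_image_diam_le hX hY hYX hm hmax c (hpos n)
  let c : ℕ → ClopenCopy F X := fun n => Nat.rec (.refl hX) (fun n c => next c n) n
  have hS n : IsPairHomeoOn F (c n) (X \ Y) (c n '' (X \ Y)) :=
    (c n).isPairHomeoOn.mono sdiff_subset
  choose k hk using fun n => (hS n).exists_symm_trans (hS (n + 1)) (hX.diff hY).isClosed.isCompact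
  have hsys := ClopenCopy.isShiftSystem hX hY hYX c (fun n => hnext_subset (c n) n) hk
  have hdiam : Tendsto (fun n => Metric.diam (c n '' X)) atTop (𝓝 0) := by
    rw [← tendsto_add_atTop_iff_nat 1]
    exact squeeze_zero (fun n => Metric.diam_nonneg) (fun n => hnext_diam (c n) n)
      (tendsto_pow_atTop_nhds_zero_of_lt_one (by norm_num) (by norm_num))
  have hc₀ (s : Set E) : c 0 '' s = s := image_id s
  have := hsys.isPairHomeoOn_shiftMap hdiam
  rw [hc₀, hc₀, sdiff_sdiff_cancel_left hYX] at this
  exact ⟨_, this⟩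

theorem SelfSimilarPair.exists_isPairHomeoOn [TopologicalSpace.MetrizableSpace E]
    [CompactSpace E] [TotallyDisconnectedSpace E] (hss : SelfSimilarPair F) {U V : Set E}
    (hU : IsClopen U) (hV : IsClopen V) (hUM : (U ∩ MaxSet F).Nonempty)
    (hVM : (V ∩ MaxSet F).Nonempty) : ∃ f, IsPairHomeoOn F f U V := by
  obtain ⟨x, hxU, hx⟩ := hUM
  obtain ⟨y, hyV, hy⟩ := hVM
  have : Nonempty E := ⟨x⟩
  obtain ⟨f, hf⟩ := hss.exists_isPairHomeoOn_of_subset isClopen_univ hU (subset_univ U) hxU hx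
  obtain ⟨g, hg⟩ := hss.exists_isPairHomeoOn_of_subset isClopen_univ hV (subset_univ V) hyV hy
  exact hf.exists_symm_trans hg isCompact_univ

end Absorption

variable {E : Type*} [TopologicalSpace E] [Nonempty E] [CompactSpace E]
  [TopologicalSpace.MetrizableSpace E] [TotallyDisconnectedSpace E]

theorem exists_supported_homeo_mapping_halfspace_general
    (F : Set E) (huss : UniformlySelfSimilar F)
    (H₁ H₂ H₃ H₄ : Set E) (h1 : IsHalfSpace F H₁) (h2 : IsHalfSpace F H₂)
    (h3 : IsHalfSpace F H₃) (h4 : IsHalfSpace F H₄)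
    (h13 : H₁ ⊆ H₃) (h23 : H₂ ⊆ H₃) (h43 : H₄ ⊆ H₃)
    (h41 : Disjoint H₄ H₁) (h42 : Disjoint H₄ H₂) :
    ∃ φ ∈ EndsHomeo F, SupportedOn H₃ φ ∧ (φ : Equiv.Perm E) '' H₁ = H₂ := by
  classical
  obtain ⟨hss, -, -⟩ := huss
  obtain ⟨m, hm4, hm⟩ := h4.2.1
  have hm1 : m ∈ (H₃ \ H₁) ∩ MaxSet F := ⟨⟨h43 hm4, disjoint_left.mp h41 hm4⟩, hm⟩
  have hm2 : m ∈ (H₃ \ H₂) ∩ MaxSet F := ⟨⟨h43 hm4, disjoint_left.mp h42 hm4⟩, hm⟩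
  obtain ⟨a, ha⟩ := hss.exists_isPairHomeoOn h1.1 h2.1 h1.2.1 h2.2.1
  obtain ⟨b, hb⟩ := hss.exists_isPairHomeoOn (h3.1.diff h1.1) (h3.1.diff h2.1) ⟨m, hm1⟩ ⟨m, hm2⟩
  have hc := ha.piecewise hb h1.1.isOpen (h3.1.diff h1.1).isOpen disjoint_sdiff_right
    disjoint_sdiff_right
  rw [union_sdiff_cancel h13, union_sdiff_cancel h23] at hc
  have hd := hc.piecewise (.id F H₃ᶜ) h3.1.isOpen h3.1.compl.isOpen disjoint_compl_right
    disjoint_compl_right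
  rw [union_compl_self] at hd
  obtain ⟨φ, hφ, hφd⟩ := hd.exists_mem_endsHomeo
  refine ⟨φ, hφ, fun x hx => by rw [hφd, piecewise_eq_of_notMem _ _ _ hx]; rfl, ?_⟩
  rw [hφd, ((piecewise_eqOn H₃ _ _).mono h13).image_eq, (piecewise_eqOn H₁ a b).image_eq,
    ha.bijOn.image_eq]

theorem exists_supported_homeo_mapping_halfspace
    (F : Set E) (hF : IsClosed F) (huss : UniformlySelfSimilar F)
    (H₁ H₂ H₃ H₄ : Set E) (h1 : IsHalfSpace F H₁) (h2 : IsHalfSpace F H₂)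
    (h3 : IsHalfSpace F H₃) (h4 : IsHalfSpace F H₄)
    (h13 : H₁ ⊆ H₃) (h23 : H₂ ⊆ H₃) (h43 : H₄ ⊆ H₃)
    (h41 : Disjoint H₄ H₁) (h42 : Disjoint H₄ H₂) :
    ∃ φ ∈ EndsHomeo F, SupportedOn H₃ φ ∧ (φ : Equiv.Perm E) '' H₁ = H₂ :=
  exists_supported_homeo_mapping_halfspace_general F huss H₁ H₂ H₃ H₄ h1 h2 h3 h4 h13 h23 h43 h41
    h42
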